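/- arXiv:0706.2659 — 5 statements merged into one kernel-verified Lean document; each statement's English description precedes it below -/
import Mathlib

section
/- Let q > 0 be real, q ≠ 1, and let a, b be integers with |a|, |b| ≥ 2 and a ≠ −b. Define the 4-vector v = (1, c, c, −1) where c = [a]_q[b]_q(β_q(a) + β_q(b))/[a+b]_q, [x]_q is the quantum number and β_q(x) = sqrt(1 − 1/[x]_q²). Then v lies in the kernel of the matrix S = I₄ − M_a ⊗ M_b, where M_a is the 2×2 matrix [[q^{−a}/[a]_q, β_q(a)],[β_q(a), −q^{a}/[a]_q]] and M_b is the 2×2 matrix [[q^{b}/[b]_q, β_q(b)],[β_q(b), −q^{−b}/[b]_q]]. -/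
open Matrix Kronecker

/-- Quantum number `[d]_q` for an integer `d`. -/
noncomputable def qnumZ (q : ℝ) (d : ℤ) : ℝ := (q ^ d - q ^ (-d)) / (q - q⁻¹)

lemma sub_inv_ne (q : ℝ) (hq : 0 < q) (hq1 : q ≠ 1) : q - q⁻¹ ≠ 0 := by
  have h : q ^ (1:ℤ) ≠ q ^ (-1:ℤ) :=
    fun h => by simpa using zpow_right_injective₀ hq hq1 h
  simpa [_root_.zpow_neg] using sub_ne_zero.mpr h

lemma num_ne (q : ℝ) (hq : 0 < q) (hq1 : q ≠ 1) (d : ℤ) (hd : d ≠ 0) :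
    q ^ d - (q ^ d)⁻¹ ≠ 0 := by
  have h : q ^ d ≠ q ^ (-d) := fun h => hd (by
    have := zpow_right_injective₀ hq hq1 h; omega)
  rw [← _root_.zpow_neg]
  exact sub_ne_zero.mpr h

lemma qnumZ_inv (q : ℝ) (d : ℤ) : qnumZ q⁻¹ d = qnumZ q d := by
  unfold qnumZ
  rw [_root_.inv_zpow', _root_.inv_zpow', inv_inv, neg_neg,
      show q ^ (-d) - q ^ d = -(q ^ d - q ^ (-d)) by ring,
      show q⁻¹ - q = -(q - q⁻¹) by ring, neg_div_neg_eq]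

lemma qnumZ_neg (q : ℝ) (d : ℤ) : qnumZ q (-d) = -qnumZ q d := by
  unfold qnumZ; rw [neg_neg, show q ^ (-d) - q ^ d = -(q ^ d - q ^ (-d)) by ring, neg_div]

lemma one_le_qnumZ (q : ℝ) (hq : 1 < q) (d : ℤ) (hd : 1 ≤ d) : 1 ≤ qnumZ q d := by
  have hs : 0 < q - q⁻¹ := by
    have : q⁻¹ < 1 := inv_lt_one_of_one_lt₀ hq
    linarith
  rw [qnumZ, le_div_iff₀ hs, one_mul]
  have h1 : q ^ (1:ℤ) ≤ q ^ d := zpow_le_zpow_right₀ hq.le hd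
  have h2 : q ^ (-d) ≤ q ^ (-1:ℤ) := zpow_le_zpow_right₀ hq.le (by omega)
  simp only [zpow_one, _root_.zpow_neg, zpow_one] at h1 h2 ⊢
  linarith

lemma qnumZ_sq (q : ℝ) (hq : 0 < q) (hq1 : q ≠ 1) (d : ℤ) (hd : 1 ≤ |d|) :
    1 ≤ (qnumZ q d) ^ 2 := by
  have key : ∀ q' : ℝ, 1 < q' → 1 ≤ (qnumZ q' d) ^ 2 := by
    intro q' h
    rcases le_abs.mp hd with hd' | hd'
    · nlinarith [one_le_qnumZ q' h d hd']
    · have := one_le_qnumZ q' h (-d) hd'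
      rw [qnumZ_neg] at this
      nlinarith
  rcases lt_or_gt_of_ne hq1 with h | h
  · rw [← qnumZ_inv]
    exact key q⁻¹ ((one_lt_inv₀ hq).mpr h)
  · exact key q h


lemma sq1_ne (q : ℝ) (hq : 0 < q) (hq1 : q ≠ 1) (d : ℤ) (hd : d ≠ 0) :
    q ^ d * q ^ d - 1 ≠ 0 := by
  rw [← zpow_add₀ (ne_of_gt hq), sub_ne_zero]
  intro h
  have : q ^ (d + d) = q ^ (0 : ℤ) := by simpa using h
  have := zpow_right_injective₀ hq hq1 this
  omega

lemma qq1_ne (q : ℝ) (hq : 0 < q) (hq1 : q ≠ 1) : q * q - 1 ≠ 0 := by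
  intro h
  have h1 : (q - 1) * (q + 1) = 0 := by linarith
  rcases mul_eq_zero.mp h1 with h' | h'
  · exact hq1 (by linarith)
  · linarith


lemma comp00 (x y s α β : ℝ) (hx : x ≠ 0) (hy : y ≠ 0) (hs : s ≠ 0)
    (hna : x - x⁻¹ ≠ 0) (hnb : y - y⁻¹ ≠ 0) (hnab : x * y - (x * y)⁻¹ ≠ 0)
    (h2a : x * x - 1 ≠ 0) (h2b : y * y - 1 ≠ 0) (h2ab : x * y * (x * y) - 1 ≠ 0)
    (eα : α ^ 2 * (x ^ 2 - 1) ^ 2 = (x ^ 2 - 1) ^ 2 - s ^ 2 * x ^ 2)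
    (eβ : β ^ 2 * (y ^ 2 - 1) ^ 2 = (y ^ 2 - 1) ^ 2 - s ^ 2 * y ^ 2) :
    1 - (x)⁻¹ / ((x - (x)⁻¹) / (s)) * (y / ((y - (y)⁻¹) / (s))) +
        -((x)⁻¹ / ((x - (x)⁻¹) / (s)) * β *
            ((x - (x)⁻¹) / (s) * ((y - (y)⁻¹) / (s)) * (α + β) /
              (((x * y) - ((x * y))⁻¹) / (s)))) +
      (-(α * (y / ((y - (y)⁻¹) / (s))) *
            ((x - (x)⁻¹) / (s) * ((y - (y)⁻¹) / (s)) * (α + β) /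
              (((x * y) - ((x * y))⁻¹) / (s)))) +
        α * β) =
    0 := by
  have h2a' : x ^ 2 - 1 ≠ 0 := by rwa [sq]
  have h2b' : y ^ 2 - 1 ≠ 0 := by rwa [sq]
  have h2ab' : x ^ 2 * y ^ 2 - 1 ≠ 0 := by intro h; exact h2ab (by linear_combination h)
  have h2ab'' : y ^ 2 * x ^ 2 - 1 ≠ 0 := by intro h; exact h2ab (by linear_combination h)
  field_simp
  linear_combination (-(y^2-1)*y^2) * eα + (-(x^2-1)) * eβ

lemma comp01 (x y s α β : ℝ) (hx : x ≠ 0) (hy : y ≠ 0) (hs : s ≠ 0)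
    (hna : x - x⁻¹ ≠ 0) (hnb : y - y⁻¹ ≠ 0) (hnab : x * y - (x * y)⁻¹ ≠ 0)
    (h2a : x * x - 1 ≠ 0) (h2b : y * y - 1 ≠ 0) (h2ab : x * y * (x * y) - 1 ≠ 0)
    (eα : α ^ 2 * (x ^ 2 - 1) ^ 2 = (x ^ 2 - 1) ^ 2 - s ^ 2 * x ^ 2)
    (eβ : β ^ 2 * (y ^ 2 - 1) ^ 2 = (y ^ 2 - 1) ^ 2 - s ^ 2 * y ^ 2) :
    -((x)⁻¹ / ((x - (x)⁻¹) / (s)) * β) +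
        (1 - (x)⁻¹ / ((x - (x)⁻¹) / (s)) * (-(y)⁻¹ / ((y - (y)⁻¹) / (s)))) *
          ((x - (x)⁻¹) / (s) * ((y - (y)⁻¹) / (s)) * (α + β) /
            (((x * y) - ((x * y))⁻¹) / (s))) +
      (-(α * β *
            ((x - (x)⁻¹) / (s) * ((y - (y)⁻¹) / (s)) * (α + β) /
              (((x * y) - ((x * y))⁻¹) / (s)))) +
        α * (-(y)⁻¹ / ((y - (y)⁻¹) / (s)))) =
    0 := by
  have h2a' : x ^ 2 - 1 ≠ 0 := by rwa [sq]
  have h2b' : y ^ 2 - 1 ≠ 0 := by rwa [sq]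
  have h2ab' : x ^ 2 * y ^ 2 - 1 ≠ 0 := by intro h; exact h2ab (by linear_combination h)
  have h2ab'' : y ^ 2 * x ^ 2 - 1 ≠ 0 := by intro h; exact h2ab (by linear_combination h)
  field_simp
  linear_combination (-(y^2-1)^2*β) * eα + (-(x^2-1)^2*α) * eβ

lemma comp10 (x y s α β : ℝ) (hx : x ≠ 0) (hy : y ≠ 0) (hs : s ≠ 0)
    (hna : x - x⁻¹ ≠ 0) (hnb : y - y⁻¹ ≠ 0) (hnab : x * y - (x * y)⁻¹ ≠ 0)
    (h2a : x * x - 1 ≠ 0) (h2b : y * y - 1 ≠ 0) (h2ab : x * y * (x * y) - 1 ≠ 0)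
    (eα : α ^ 2 * (x ^ 2 - 1) ^ 2 = (x ^ 2 - 1) ^ 2 - s ^ 2 * x ^ 2)
    (eβ : β ^ 2 * (y ^ 2 - 1) ^ 2 = (y ^ 2 - 1) ^ 2 - s ^ 2 * y ^ 2) :
    -(α * (y / ((y - (y)⁻¹) / (s)))) +
        -(α * β *
            ((x - (x)⁻¹) / (s) * ((y - (y)⁻¹) / (s)) * (α + β) /
              (((x * y) - ((x * y))⁻¹) / (s)))) +
      ((1 - -x / ((x - (x)⁻¹) / (s)) * (y / ((y - (y)⁻¹) / (s)))) *
          ((x - (x)⁻¹) / (s) * ((y - (y)⁻¹) / (s)) * (α + β) /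
            (((x * y) - ((x * y))⁻¹) / (s))) +
        -x / ((x - (x)⁻¹) / (s)) * β) =
    0 := by
  have h2a' : x ^ 2 - 1 ≠ 0 := by rwa [sq]
  have h2b' : y ^ 2 - 1 ≠ 0 := by rwa [sq]
  have h2ab' : x ^ 2 * y ^ 2 - 1 ≠ 0 := by intro h; exact h2ab (by linear_combination h)
  have h2ab'' : y ^ 2 * x ^ 2 - 1 ≠ 0 := by intro h; exact h2ab (by linear_combination h)
  field_simp
  linear_combination (-(y^2-1)^2*β) * eα + (-(x^2-1)^2*α) * eβ

lemma comp11 (x y s α β : ℝ) (hx : x ≠ 0) (hy : y ≠ 0) (hs : s ≠ 0)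
    (hna : x - x⁻¹ ≠ 0) (hnb : y - y⁻¹ ≠ 0) (hnab : x * y - (x * y)⁻¹ ≠ 0)
    (h2a : x * x - 1 ≠ 0) (h2b : y * y - 1 ≠ 0) (h2ab : x * y * (x * y) - 1 ≠ 0)
    (eα : α ^ 2 * (x ^ 2 - 1) ^ 2 = (x ^ 2 - 1) ^ 2 - s ^ 2 * x ^ 2)
    (eβ : β ^ 2 * (y ^ 2 - 1) ^ 2 = (y ^ 2 - 1) ^ 2 - s ^ 2 * y ^ 2) :
    -(α * β) +
        -(α * (-(y)⁻¹ / ((y - (y)⁻¹) / (s))) *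
            ((x - (x)⁻¹) / (s) * ((y - (y)⁻¹) / (s)) * (α + β) /
              (((x * y) - ((x * y))⁻¹) / (s)))) +
      (-(-x / ((x - (x)⁻¹) / (s)) * β *
            ((x - (x)⁻¹) / (s) * ((y - (y)⁻¹) / (s)) * (α + β) /
              (((x * y) - ((x * y))⁻¹) / (s)))) +
        (-x / ((x - (x)⁻¹) / (s)) * (-(y)⁻¹ / ((y - (y)⁻¹) / (s))) - 1)) =
    0 := by
  have h2a' : x ^ 2 - 1 ≠ 0 := by rwa [sq]
  have h2b' : y ^ 2 - 1 ≠ 0 := by rwa [sq]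
  have h2ab' : x ^ 2 * y ^ 2 - 1 ≠ 0 := by intro h; exact h2ab (by linear_combination h)
  have h2ab'' : y ^ 2 * x ^ 2 - 1 ≠ 0 := by intro h; exact h2ab (by linear_combination h)
  field_simp
  linear_combination (y^2-1) * eα + (x^2*(x^2-1)) * eβ

theorem kernel_vector_crossing_case (q : ℝ) (hq : 0 < q) (hq1 : q ≠ 1)
    (a b : ℤ) (ha : 2 ≤ |a|) (hb : 2 ≤ |b|) (hab : a + b ≠ 0) :
    let βa : ℝ := Real.sqrt (1 - 1 / (qnumZ q a) ^ 2)
    let βb : ℝ := Real.sqrt (1 - 1 / (qnumZ q b) ^ 2)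
    let A : Matrix (Fin 2) (Fin 2) ℝ :=
      !![q ^ (-a) / qnumZ q a, βa; βa, -(q ^ a) / qnumZ q a]
    let B : Matrix (Fin 2) (Fin 2) ℝ :=
      !![q ^ b / qnumZ q b, βb; βb, -(q ^ (-b)) / qnumZ q b]
    let c : ℝ := qnumZ q a * qnumZ q b * (βa + βb) / qnumZ q (a + b)
    let v : Fin 2 × Fin 2 → ℝ := fun p => !![(1 : ℝ), c; c, -1] p.1 p.2
    ((1 : Matrix (Fin 2 × Fin 2) (Fin 2 × Fin 2) ℝ) - A ⊗ₖ B) *ᵥ v = 0 := by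
  intro βa βb A B c v
  have hq0 : q ≠ 0 := ne_of_gt hq
  have hs : q - q⁻¹ ≠ 0 := sub_inv_ne q hq hq1
  have ha0 : a ≠ 0 := by intro h; simp [h] at ha
  have hb0 : b ≠ 0 := by intro h; simp [h] at hb
  have hna : q ^ a - (q ^ a)⁻¹ ≠ 0 := num_ne q hq hq1 a ha0
  have hnb : q ^ b - (q ^ b)⁻¹ ≠ 0 := num_ne q hq hq1 b hb0
  have hnab : q ^ a * q ^ b - (q ^ a * q ^ b)⁻¹ ≠ 0 := by
    have := num_ne q hq hq1 (a + b) hab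
    rwa [zpow_add₀ hq0] at this
  have hxa : q ^ a ≠ 0 := zpow_ne_zero a hq0
  have h2a : q ^ a * q ^ a - 1 ≠ 0 := sq1_ne q hq hq1 a ha0
  have h2b : q ^ b * q ^ b - 1 ≠ 0 := sq1_ne q hq hq1 b hb0
  have h2ab : q ^ a * q ^ b * (q ^ a * q ^ b) - 1 ≠ 0 := by
    have := sq1_ne q hq hq1 (a + b) hab
    rw [zpow_add₀ hq0] at this
    intro h
    exact this (by linear_combination h)
  have hqq : q * q - 1 ≠ 0 := qq1_ne q hq hq1
  have hxb : q ^ b ≠ 0 := zpow_ne_zero b hq0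
  have hNa : qnumZ q a ≠ 0 := by
    rw [qnumZ, _root_.zpow_neg]; exact div_ne_zero hna hs
  have hNb : qnumZ q b ≠ 0 := by
    rw [qnumZ, _root_.zpow_neg]; exact div_ne_zero hnb hs
  have eα0 : βa ^ 2 = 1 - 1 / (qnumZ q a) ^ 2 := by
    apply Real.sq_sqrt
    rw [sub_nonneg, div_le_one (by positivity)]
    exact qnumZ_sq q hq hq1 a (by omega)
  have eβ0 : βb ^ 2 = 1 - 1 / (qnumZ q b) ^ 2 := by
    apply Real.sq_sqrt
    rw [sub_nonneg, div_le_one (by positivity)]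
    exact qnumZ_sq q hq hq1 b (by omega)
  have eα : βa ^ 2 * ((q^a)^2 - 1)^2 = ((q^a)^2 - 1)^2 - (q - q⁻¹)^2 * (q^a)^2 := by
    rw [eα0, qnumZ, _root_.zpow_neg]
    have : (q ^ a) ^ 2 - 1 ≠ 0 := by rw [sq]; exact h2a
    field_simp
  have eβ : βb ^ 2 * ((q^b)^2 - 1)^2 = ((q^b)^2 - 1)^2 - (q - q⁻¹)^2 * (q^b)^2 := by
    rw [eβ0, qnumZ, _root_.zpow_neg]
    have : (q ^ b) ^ 2 - 1 ≠ 0 := by rw [sq]; exact h2b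
    field_simp
  funext p
  obtain ⟨i, j⟩ := p
  fin_cases i <;> fin_cases j <;>
    simp [A, B, v, Matrix.mulVec, dotProduct, Fintype.sum_prod_type,
      Fin.sum_univ_two, Matrix.one_apply, Prod.ext_iff] <;>
    simp only [c, qnumZ, _root_.zpow_neg, zpow_add₀ hq0]
  · exact comp00 (q ^ a) (q ^ b) (q - q⁻¹) βa βb hxa hxb hs hna hnb hnab h2a h2b h2ab eα eβ
  · exact comp01 (q ^ a) (q ^ b) (q - q⁻¹) βa βb hxa hxb hs hna hnb hnab h2a h2b h2ab eα eβ
  · exact comp10 (q ^ a) (q ^ b) (q - q⁻¹) βa βb hxa hxb hs hna hnb hnab h2a h2b h2ab eα eβ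
  · exact comp11 (q ^ a) (q ^ b) (q - q⁻¹) βa βb hxa hxb hs hna hnb hnab h2a h2b h2ab eα eβ
end

section
/- Let q > 0, q ≠ 1, and d an integer with |d| ≥ 2. Set β = sqrt(1 − 1/[d]_q²) and let M = [[q^{−d}/[d]_q, β],[β, −q^{d}/[d]_q]], N = [[q^{d}/[d]_q, β],[β, −q^{−d}/[d]_q]]. Then the kernel of I₄ − M ⊗ N is spanned by the two vectors (1, 0, 0, 1) and ([2d]_q/([d]_q² β), 1, 1, 0). -/
/-!
Put `a = q^{-d}/[d]_q` and `b = q^d/[d]_q`, so that `M = !![a, β; β, -b]`, `N = !![b, β; β, -a]`,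
`ab = 1/[d]_q²` and hence `β² = 1 - ab`. Reading a vector `u` as the `2 × 2` matrix `U`, the
equation `(M ⊗ N) u = u` says `M U N = U`; using `β² = 1 - ab`, two of its entries combine to
`(a + b)(U₀₁ - U₁₀) = 0` and a third then reduces to `β² (U₀₀ - U₁₁ - c U₀₁) = 0` with
`c β = a + b`. Both factors `a + b` and `β` are nonzero because `[d]_q² > 1` for `|d| ≥ 2`,
which is `|sinh (d t)| > |sinh t|` for `q = exp t`; and `c β = a + b` is the duplication
formula `[2d]_q = (q^d + q^{-d}) [d]_q`.
-/

open Matrix Kronecker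

theorem qnumZ_exp (t : ℝ) (d : ℤ) : qnumZ (Real.exp t) d = Real.sinh (d * t) / Real.sinh t := by
  have hpow (n : ℤ) : Real.exp t ^ n = Real.exp (n * t) := by
    rw [← Real.rpow_intCast, ← Real.exp_mul, mul_comm]
  rw [qnumZ, hpow, hpow, ← Real.exp_neg, Real.sinh_eq, Real.sinh_eq, Int.cast_neg, neg_mul]
  field_simp

theorem one_lt_sq_qnumZ {q : ℝ} (hq : 0 < q) (hq1 : q ≠ 1) {d : ℤ} (hd : 2 ≤ |d|) :
    1 < qnumZ q d ^ 2 := by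
  obtain ⟨t, rfl⟩ : ∃ t, Real.exp t = q := ⟨Real.log q, Real.exp_log hq⟩
  have ht : 0 < |t| := abs_pos.2 (by rintro rfl; simp at hq1)
  have hsinh : |Real.sinh t| < |Real.sinh (d * t)| := by
    rw [Real.abs_sinh, Real.abs_sinh, Real.sinh_lt_sinh, abs_mul]
    have : (2 : ℝ) ≤ |(d : ℝ)| := by exact_mod_cast hd
    nlinarith
  have hpos : 0 < Real.sinh t ^ 2 := by
    rw [← sq_abs, Real.abs_sinh]
    exact pow_pos (Real.sinh_pos_iff.2 ht) 2
  rw [qnumZ_exp, div_pow, one_lt_div hpos]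
  exact sq_lt_sq.2 hsinh

theorem qnumZ_two_mul {q : ℝ} (hq : q ≠ 0) (d : ℤ) :
    qnumZ q (2 * d) = (q ^ d + q ^ (-d)) * qnumZ q d := by
  rw [qnumZ, qnumZ, two_mul, neg_add, zpow_add₀ hq, zpow_add₀ hq, mul_div_assoc']
  ring

section KroneckerKernel

variable {a b β c : ℝ}

theorem mulVec_one_sub_kronecker_eq_zero_iff (hβ : β ≠ 0) (hβ2 : β ^ 2 = 1 - a * b)
    (hab : a + b ≠ 0) (hc : c * β = a + b) (u : Fin 2 × Fin 2 → ℝ) :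
    ((1 : Matrix (Fin 2 × Fin 2) (Fin 2 × Fin 2) ℝ) - !![a, β; β, -b] ⊗ₖ !![b, β; β, -a]) *ᵥ u = 0 ↔
      u (0, 1) = u (1, 0) ∧ u (0, 0) = c * u (0, 1) + u (1, 1) := by
  rw [funext_iff, Prod.forall, Fin.forall_fin_two, Fin.forall_fin_two, Fin.forall_fin_two]
  simp only [mulVec, dotProduct, Fin.isValue, Matrix.sub_apply, kroneckerMap_apply, of_apply,
    cons_val', cons_val_fin_one, cons_val_zero, cons_val_one, Fintype.sum_prod_type,
    Fin.sum_univ_two, ne_eq, Prod.mk.injEq, zero_ne_one, one_ne_zero, and_false, and_true,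
    not_false_eq_true, one_apply_ne, one_apply_eq, Pi.zero_apply, zero_sub, neg_mul, mul_neg,
    sub_neg_eq_add, zero_add, neg_neg]
  generalize u (0, 0) = x, u (0, 1) = y, u (1, 0) = z, u (1, 1) = w
  constructor
  · rintro ⟨⟨E00, E01⟩, E10, -⟩
    have hyz : y = z := by
      refine mul_left_cancel₀ hab ?_
      linear_combination b * E01 - a * E10 + (b * z - a * y) * hβ2
    refine ⟨hyz, mul_left_cancel₀ (pow_ne_zero 2 hβ) ?_⟩
    subst hyz
    linear_combination E00 + x * hβ2 - β * y * hc
  · rintro ⟨rfl, rfl⟩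
    refine ⟨⟨?_, ?_⟩, ?_, ?_⟩
    · linear_combination β * y * hc - (w + c * y) * hβ2
    · linear_combination -a * y * hc - y * hβ2
    · linear_combination -b * y * hc - y * hβ2
    · linear_combination -β * y * hc - w * hβ2

theorem ker_toLin'_one_sub_kronecker (hβ : β ≠ 0) (hβ2 : β ^ 2 = 1 - a * b)
    (hab : a + b ≠ 0) (hc : c * β = a + b) :
    LinearMap.ker (Matrix.toLin'
        ((1 : Matrix (Fin 2 × Fin 2) (Fin 2 × Fin 2) ℝ) - !![a, β; β, -b] ⊗ₖ !![b, β; β, -a]))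
      = Submodule.span ℝ {fun p => !![(1 : ℝ), 0; 0, 1] p.1 p.2,
          fun p => !![c, (1 : ℝ); 1, 0] p.1 p.2} := by
  ext u
  rw [LinearMap.mem_ker, Matrix.toLin'_apply,
    mulVec_one_sub_kronecker_eq_zero_iff hβ hβ2 hab hc, Submodule.mem_span_pair]
  constructor
  · rintro ⟨hyz, hxw⟩
    refine ⟨u (1, 1), u (0, 1), funext fun ⟨i, j⟩ => ?_⟩
    fin_cases i <;> fin_cases j <;> simp [hyz, hxw, add_comm, mul_comm]
  · rintro ⟨s, t, rfl⟩
    simp [add_comm, mul_comm]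

end KroneckerKernel

theorem kernel_identity_rule_case (q : ℝ) (hq : 0 < q) (hq1 : q ≠ 1)
    (d : ℤ) (hd : 2 ≤ |d|) :
    let β : ℝ := Real.sqrt (1 - 1 / (qnumZ q d) ^ 2)
    let M : Matrix (Fin 2) (Fin 2) ℝ :=
      !![q ^ (-d) / qnumZ q d, β; β, -(q ^ d) / qnumZ q d]
    let N : Matrix (Fin 2) (Fin 2) ℝ :=
      !![q ^ d / qnumZ q d, β; β, -(q ^ (-d)) / qnumZ q d]
    let c : ℝ := qnumZ q (2 * d) / ((qnumZ q d) ^ 2 * β)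
    let v₁ : Fin 2 × Fin 2 → ℝ := fun p => !![(1 : ℝ), 0; 0, 1] p.1 p.2
    let v₂ : Fin 2 × Fin 2 → ℝ := fun p => !![c, (1 : ℝ); 1, 0] p.1 p.2
    LinearMap.ker (Matrix.toLin'
        ((1 : Matrix (Fin 2 × Fin 2) (Fin 2 × Fin 2) ℝ) - M ⊗ₖ N))
      = Submodule.span ℝ {v₁, v₂} := by
  set D := qnumZ q d
  intro β M N c v₁ v₂
  have hD : 1 < D ^ 2 := one_lt_sq_qnumZ hq hq1 hd
  have hD0 : D ≠ 0 := by rintro h; norm_num [h] at hD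
  have hβ2pos : 0 < 1 - 1 / D ^ 2 := by
    rw [sub_pos, div_lt_one (by positivity)]
    exact hD
  have hβ : β ≠ 0 := (Real.sqrt_pos.2 hβ2pos).ne'
  have hβ2 : β ^ 2 = 1 - q ^ (-d) / D * (q ^ d / D) := by
    rw [Real.sq_sqrt hβ2pos.le, div_mul_div_comm, _root_.zpow_neg, inv_mul_cancel₀ (by positivity)]
    ring
  have hab : q ^ (-d) / D + q ^ d / D ≠ 0 := by
    rw [← add_div]
    exact div_ne_zero (by positivity) hD0
  have hc : c * β = q ^ (-d) / D + q ^ d / D := by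
    simp only [c, qnumZ_two_mul hq.ne']
    field_simp
    ring
  simpa only [M, N, v₁, v₂, neg_div] using ker_toLin'_one_sub_kronecker hβ hβ2 hab hc
end

section
/- For a standard Young tableau m with n boxes and any i with 1 ≤ i ≤ n−1, swapping the entries i and i+1 in m yields a standard Young tableau if and only if the axial distance d_i(m) satisfies |d_i(m)| ≠ 1. -/
open Finset
open scoped Classical

/-- A filling `pos : Fin n → ℕ × ℕ` (the cell, as `(row, column)`, containing entry `k+1`)
is a standard Young tableau iff it is injective and every prefix of cells forms a
Young diagram. -/
def IsSYTFun (n : ℕ) (pos : Fin n → ℕ × ℕ) : Prop :=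
  Function.Injective pos ∧
    ∀ k : Fin n, ∃ Y : YoungDiagram,
      Y.cells = (Finset.univ.filter (fun j => j ≤ k)).image pos

/-- A standard Young tableau with `n` boxes. -/
structure SYT (n : ℕ) where
  pos : Fin n → ℕ × ℕ
  isSYT : IsSYTFun n pos

/-- The content (column minus row) of a cell. -/
def cellContent (p : ℕ × ℕ) : ℤ := (p.2 : ℤ) - (p.1 : ℤ)

/-- The axial distance `d_i(m)` between the entries `i` and `i+1` of `m`
(content of the cell of `i+1` minus content of the cell of `i`); `0` when `i`
is out of range. -/
def SYT.d {n : ℕ} (m : SYT n) (i : ℕ) : ℤ :=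
  if h : 0 < i ∧ i < n then
    cellContent (m.pos ⟨i, h.2⟩) -
      cellContent (m.pos ⟨i - 1, Nat.lt_of_le_of_lt (Nat.sub_le i 1) h.2⟩)
  else 0

/-- The shape of a standard Young tableau, as a finite set of cells. -/
def SYT.shape {n : ℕ} (m : SYT n) : Finset (ℕ × ℕ) := Finset.univ.image m.pos

/-- `g_i(m)`: the tableau obtained from `m` by exchanging the entries `i` and `i+1`,
if this again yields a standard Young tableau, and `m` otherwise. -/
noncomputable def SYT.g {n : ℕ} (m : SYT n) (i : ℕ) : SYT n :=
  if h : ∃ h' : 0 < i ∧ i < n,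
      IsSYTFun n (m.pos ∘ Equiv.swap
        (⟨i - 1, Nat.lt_of_le_of_lt (Nat.sub_le i 1) h'.2⟩ : Fin n) ⟨i, h'.2⟩) then
    ⟨_, h.choose_spec⟩
  else m

/-- `(m, m')` is a crossing pair: for some `i` the axial distances differ and the
swaps `g_i` act on both tableaux either both nontrivially or both trivially. -/
def Crossing {n : ℕ} (m m' : SYT n) : Prop :=
  ∃ i : ℕ, 0 < i ∧ i < n ∧ m.d i ≠ m'.d i ∧
    ((|m.d i| ≠ 1 ∧ |m'.d i| ≠ 1) ∨ (|m.d i| = 1 ∧ |m'.d i| = 1))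

/-!
Let `A` be the cells of the entries `1, …, i - 1` and `P`, `Q` those of `i`, `i + 1`. The swap
changes only the set of cells of the first `i` entries, from `A ∪ {P}` to `A ∪ {Q}`, so it is
standard iff `A ∪ {Q}` is a lower set, i.e. iff `P ≤ Q` fails. Since `A ∪ {P, Q}` is a lower set,
`P ≤ Q` forces `Q` to cover `P`, so that `d_i = ±1`; incomparable cells have contents at least
`2` apart.
-/

lemma isLowerSet_insert_iff_not_le {α : Type*} [PartialOrder α] {A : Set α} {P Q : α}
    (hA : IsLowerSet A) (hQPA : IsLowerSet (insert Q (insert P A))) (hP : P ∉ A)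
    (hQP : Q ≠ P) :
    IsLowerSet (insert Q A) ↔ ¬P ≤ Q := by
  refine ⟨fun hQA hPQ => ?_, fun hPQ x y hyx hx => ?_⟩
  · rcases hQA hPQ (Set.mem_insert Q A) with h | h
    · exact hQP h.symm
    · exact hP h
  · rcases hx with rfl | hx
    · rcases hQPA hyx (Set.mem_insert _ _) with rfl | rfl | hy
      · exact Set.mem_insert _ _
      · exact absurd hyx hPQ
      · exact Set.mem_insert_of_mem _ hy
    · exact Set.mem_insert_of_mem _ (hA hyx hx)

lemma covBy_of_isLowerSet_insert_insert {α : Type*} [PartialOrder α] {A : Set α} {P Q : α}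
    (hA : IsLowerSet A) (hQPA : IsLowerSet (insert Q (insert P A))) (hP : P ∉ A)
    (hPQ : P < Q) : P ⋖ Q := by
  refine ⟨hPQ, fun R hPR hRQ => ?_⟩
  rcases hQPA hRQ.le (Set.mem_insert _ _) with rfl | rfl | hR
  · exact hRQ.false
  · exact hPR.false
  · exact hP (hA hPR.le hR)

lemma abs_cellContent_sub_eq_one_of_covBy {P Q : ℕ × ℕ} (h : P ⋖ Q) :
    |cellContent Q - cellContent P| = 1 := by
  rw [Prod.covBy_iff, Nat.covBy_iff_add_one_eq, Nat.covBy_iff_add_one_eq] at h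
  rcases h with ⟨h1, h2⟩ | ⟨h2, h1⟩ <;> simp [cellContent, ← h1, ← h2]

lemma abs_cellContent_sub_ne_one_of_not_le_of_not_le {P Q : ℕ × ℕ} (hPQ : ¬P ≤ Q)
    (hQP : ¬Q ≤ P) : |cellContent Q - cellContent P| ≠ 1 := by
  rw [Prod.le_def, not_and_or, not_le, not_le] at hPQ hQP
  rw [Ne, abs_eq zero_le_one, cellContent, cellContent]
  omega

lemma isLowerSet_insert_iff_abs_cellContent_sub_ne_one {A : Set (ℕ × ℕ)} {P Q : ℕ × ℕ}
    (hA : IsLowerSet A) (hPA : IsLowerSet (insert P A))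
    (hQPA : IsLowerSet (insert Q (insert P A))) (hP : P ∉ A) (hQ : Q ∉ insert P A) :
    IsLowerSet (insert Q A) ↔ |cellContent Q - cellContent P| ≠ 1 := by
  have hQP_ne : Q ≠ P := fun h => hQ (h ▸ Set.mem_insert Q A)
  have hQP_not_le : ¬Q ≤ P := fun h => hQ (hPA h (Set.mem_insert P A))
  rw [isLowerSet_insert_iff_not_le hA hQPA hP hQP_ne]
  refine ⟨fun hPQ => abs_cellContent_sub_ne_one_of_not_le_of_not_le hPQ hQP_not_le, fun h hPQ => ?_⟩
  exact h (abs_cellContent_sub_eq_one_of_covBy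
    (covBy_of_isLowerSet_insert_insert hA hQPA hP (hPQ.lt_of_ne hQP_ne.symm)))

lemma exists_youngDiagram_cells_eq_iff (s : Finset (ℕ × ℕ)) :
    (∃ Y : YoungDiagram, Y.cells = s) ↔ IsLowerSet (s : Set (ℕ × ℕ)) :=
  ⟨fun ⟨Y, hY⟩ => hY ▸ Y.isLowerSet, fun h => ⟨⟨s, h⟩, rfl⟩⟩

/-- The cells holding the entries `1, …, t` of a filling. -/
def cellsBelow {n : ℕ} (pos : Fin n → ℕ × ℕ) (t : ℕ) : Set (ℕ × ℕ) :=
  pos '' {j | (j : ℕ) < t}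

section cellsBelow

variable {n : ℕ} (pos : Fin n → ℕ × ℕ)

lemma cellsBelow_zero : cellsBelow pos 0 = ∅ := by
  simp [cellsBelow]

lemma cellsBelow_succ (k : Fin n) :
    cellsBelow pos (k + 1) = insert (pos k) (cellsBelow pos k) := by
  rw [cellsBelow, cellsBelow, ← Set.image_insert_eq]
  congr 1
  ext j
  simp only [Set.mem_ofPred_eq, Set.mem_insert_iff, Fin.ext_iff]
  omega

lemma apply_notMem_cellsBelow {pos : Fin n → ℕ × ℕ} (hinj : Function.Injective pos)
    (k : Fin n) : pos k ∉ cellsBelow pos k := by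
  rintro ⟨j, hj, hjk⟩
  exact (Nat.lt_irrefl _) (hinj hjk ▸ hj)

lemma isSYTFun_iff_isLowerSet_cellsBelow :
    IsSYTFun n pos ↔
      Function.Injective pos ∧ ∀ t ≤ n, IsLowerSet (cellsBelow pos t) := by
  have hcells (k : Fin n) :
      (((univ.filter (· ≤ k)).image pos : Finset (ℕ × ℕ)) : Set (ℕ × ℕ)) =
        cellsBelow pos (k + 1) := by
    rw [coe_image, coe_filter, cellsBelow]
    simp only [Finset.mem_univ, true_and, Fin.le_iff_val_le_val, Nat.lt_succ_iff]
  simp only [IsSYTFun, exists_youngDiagram_cells_eq_iff, hcells]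
  refine and_congr_right fun _ => ⟨fun h t ht => ?_, fun h k => h _ k.isLt⟩
  rcases t with _ | t
  · exact cellsBelow_zero pos ▸ isLowerSet_empty
  · exact h ⟨t, ht⟩

lemma cellsBelow_comp_swap_of_ne {a b : Fin n} (hab : (a : ℕ) + 1 = b) {t : ℕ}
    (ht : t ≠ b) : cellsBelow (pos ∘ Equiv.swap a b) t = cellsBelow pos t := by
  rw [cellsBelow, Set.image_comp, Equiv.image_eq_preimage_symm, Equiv.symm_swap]
  congr 1
  ext j
  simp only [Set.mem_preimage, Set.mem_ofPred_eq, Equiv.swap_apply_def]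
  split_ifs with hja hjb
  · subst hja; omega
  · subst hjb; omega
  · rfl

lemma cellsBelow_comp_swap_self {a b : Fin n} (hab : (a : ℕ) + 1 = b) :
    cellsBelow (pos ∘ Equiv.swap a b) b = insert (pos b) (cellsBelow pos a) := by
  rw [← hab, cellsBelow_succ, cellsBelow_comp_swap_of_ne pos hab (by omega), Function.comp_apply,
    Equiv.swap_apply_left]

end cellsBelow

lemma IsSYTFun.comp_swap_iff {n : ℕ} {pos : Fin n → ℕ × ℕ} (h : IsSYTFun n pos) {a b : Fin n}
    (hab : (a : ℕ) + 1 = b) :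
    IsSYTFun n (pos ∘ Equiv.swap a b) ↔ IsLowerSet (insert (pos b) (cellsBelow pos a)) := by
  obtain ⟨hinj, hlow⟩ := (isSYTFun_iff_isLowerSet_cellsBelow pos).1 h
  rw [isSYTFun_iff_isLowerSet_cellsBelow, ← cellsBelow_comp_swap_self pos hab]
  refine ⟨fun h' => h'.2 b b.isLt.le, fun hb => ⟨hinj.comp (Equiv.injective _), fun t ht => ?_⟩⟩
  obtain rfl | htb := eq_or_ne t b
  · exact hb
  · exact cellsBelow_comp_swap_of_ne pos hab htb ▸ hlow t ht

/-- Swapping the entries `i` and `i+1` of a standard Young tableau yields a standard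
Young tableau iff `|d_i(m)| ≠ 1`. -/
theorem swap_isSYT_iff (n : ℕ) (m : SYT n) (i : ℕ) (h0 : 0 < i) (hn : i < n) :
    IsSYTFun n (m.pos ∘ Equiv.swap
        (⟨i - 1, Nat.lt_of_le_of_lt (Nat.sub_le i 1) hn⟩ : Fin n) ⟨i, hn⟩)
      ↔ |m.d i| ≠ 1 := by
  set a : Fin n := ⟨i - 1, Nat.lt_of_le_of_lt (Nat.sub_le i 1) hn⟩
  set b : Fin n := ⟨i, hn⟩
  have hab : (a : ℕ) + 1 = b := Nat.sub_add_cancel h0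
  have hd : m.d i = cellContent (m.pos b) - cellContent (m.pos a) := dif_pos ⟨h0, hn⟩
  obtain ⟨hinj, hlow⟩ := (isSYTFun_iff_isLowerSet_cellsBelow m.pos).1 m.isSYT
  have hsucc_a : cellsBelow m.pos b = insert (m.pos a) (cellsBelow m.pos a) := by
    rw [← cellsBelow_succ, hab]
  have hsucc_b : cellsBelow m.pos (b + 1) =
      insert (m.pos b) (insert (m.pos a) (cellsBelow m.pos a)) := by
    rw [cellsBelow_succ, hsucc_a]
  rw [m.isSYT.comp_swap_iff hab, hd]
  refine isLowerSet_insert_iff_abs_cellContent_sub_ne_one (hlow a a.isLt.le) ?_ ?_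
    (apply_notMem_cellsBelow hinj a) ?_
  · exact hsucc_a ▸ hlow b hn.le
  · exact hsucc_b ▸ hlow (b + 1) hn
  · exact hsucc_a ▸ apply_notMem_cellsBelow hinj b
end

section
/- If m is a standard Young tableau, i an index with |d_i(m)| ≥ 2, and g_i(m) the standard tableau obtained by swapping i and i+1, then d_i(g_i(m)) = −d_i(m), d_{i−1}(g_i(m)) = d_{i−1}(m) + d_i(m), d_{i+1}(g_i(m)) = d_i(m) + d_{i+1}(m), and d_j(g_i(m)) = d_j(m) for all j with |j − i| ≥ 2. -/
open Finset
open scoped Classical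

/-!
With `c_k` the content of the cell of entry `k + 1`, `d_k = c_k - c_{k-1}`, and swapping
the entries `i` and `i + 1` permutes the sequence `c` by the transposition of `i - 1` and
`i`, which fixes every other index. Each identity is then a telescoping of the `c`'s.
-/

namespace SYT

variable {n : ℕ}

/-- Junk value `0` for `k ≥ n`, so that a swap of two entries permutes the whole sequence. -/
def content (m : SYT n) (k : ℕ) : ℤ :=
  if h : k < n then cellContent (m.pos ⟨k, h⟩) else 0

theorem d_eq (m : SYT n) (i : ℕ) :
    m.d i = if 0 < i ∧ i < n then m.content i - m.content (i - 1) else 0 := by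
  unfold d content
  split_ifs <;> first | rfl | omega

theorem content_eq_comp_swap {m m' : SYT n} {a b : Fin n}
    (h : m'.pos = m.pos ∘ Equiv.swap a b) :
    m'.content = m.content ∘ Equiv.swap (a : ℕ) b := by
  funext k
  by_cases hk : k < n
  · have hval : Equiv.swap (a : ℕ) b k = (Equiv.swap a b ⟨k, hk⟩ : ℕ) :=
      Fin.val_injective.swap_apply a b ⟨k, hk⟩
    simp [content, hval, hk, h]
  · have hfix : Equiv.swap (a : ℕ) b k = k :=
      Equiv.swap_apply_of_ne_of_ne (by omega) (by omega)
    simp only [content, Function.comp_apply, hfix, dif_neg hk]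

end SYT

theorem axial_distances_of_swap_general (n : ℕ) (m m' : SYT n) (i : ℕ)
    (h0 : 0 < i) (hn : i < n)
    (hsw : m'.pos = m.pos ∘ Equiv.swap
        (⟨i - 1, Nat.lt_of_le_of_lt (Nat.sub_le i 1) hn⟩ : Fin n) ⟨i, hn⟩) :
    m'.d i = -m.d i ∧
    (1 < i → m'.d (i - 1) = m.d (i - 1) + m.d i) ∧
    (i + 1 < n → m'.d (i + 1) = m.d i + m.d (i + 1)) ∧
    ∀ j : ℕ, 2 ≤ |(j : ℤ) - (i : ℤ)| → m'.d j = m.d j := by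
  have hc := SYT.content_eq_comp_swap hsw
  simp only [SYT.d_eq, hc, Function.comp_apply, Equiv.swap_apply_left, Equiv.swap_apply_right]
  refine ⟨?_, fun hi => ?_, fun hi => ?_, fun j hj => ?_⟩
  · simp only [if_pos (And.intro h0 hn)]
    ring
  · rw [Equiv.swap_apply_of_ne_of_ne (x := i - 1 - 1) (by omega) (by omega)]
    simp only [if_pos (show 0 < i - 1 ∧ i - 1 < n by omega), if_pos (And.intro h0 hn)]
    ring
  · rw [Equiv.swap_apply_of_ne_of_ne (x := i + 1) (by omega) (by omega), Nat.add_sub_cancel,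
      Equiv.swap_apply_right]
    simp only [if_pos (show 0 < i + 1 ∧ i + 1 < n by omega), if_pos (And.intro h0 hn)]
    ring
  · have hfar : j + 2 ≤ i ∨ i + 2 ≤ j := by rw [le_abs'] at hj; omega
    rw [Equiv.swap_apply_of_ne_of_ne (x := j) (by omega) (by omega),
      Equiv.swap_apply_of_ne_of_ne (x := j - 1) (by omega) (by omega)]

/-- Effect of the swap `g_i` on axial distances. -/
theorem axial_distances_of_swap (n : ℕ) (m m' : SYT n) (i : ℕ)
    (h0 : 0 < i) (hn : i < n) (hd : 2 ≤ |m.d i|)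
    (hsw : m'.pos = m.pos ∘ Equiv.swap
        (⟨i - 1, Nat.lt_of_le_of_lt (Nat.sub_le i 1) hn⟩ : Fin n) ⟨i, hn⟩) :
    m'.d i = -m.d i ∧
    (1 < i → m'.d (i - 1) = m.d (i - 1) + m.d i) ∧
    (i + 1 < n → m'.d (i + 1) = m.d i + m.d (i + 1)) ∧
    ∀ j : ℕ, 2 ≤ |(j : ℤ) - (i : ℤ)| → m'.d j = m.d j :=
  axial_distances_of_swap_general n m m' i h0 hn hsw
end

section
/- A standard Young tableau with n boxes is uniquely determined by its shape's first box and its sequence of axial distances (d_1, …, d_{n−1}); equivalently, two standard Young tableaux m, m' of the same size with d_k(m) = d_k(m') for all k are equal. -/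
open Finset
open scoped Classical

/-!
Induct on the entries. The first entry sits in the corner `(0, 0)`. Once the cells of the
entries `1, …, k` agree, the cell of `k + 1` is an addable cell of the same Young diagram, and
its content is fixed by the content of the cell of `k` and the axial distance `d_k`. An addable
cell of a Young diagram is determined by its content: two cells of equal content are
comparable, and the smaller one would already lie in the diagram.
-/

theorem eq_of_isLowerSet_insert_of_cellContent_eq {S : Set (ℕ × ℕ)} {c₁ c₂ : ℕ × ℕ}
    (h₁ : IsLowerSet (insert c₁ S)) (h₂ : IsLowerSet (insert c₂ S))
    (hc₁ : c₁ ∉ S) (hc₂ : c₂ ∉ S) (hc : cellContent c₁ = cellContent c₂) : c₁ = c₂ := by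
  unfold cellContent at hc
  rcases le_total c₁.1 c₂.1 with hle | hle
  · have hmem := h₂ (show c₁ ≤ c₂ from ⟨hle, by omega⟩) (Set.mem_insert _ _)
    exact (Set.mem_insert_iff.mp hmem).resolve_right hc₁
  · have hmem := h₁ (show c₂ ≤ c₁ from ⟨hle, by omega⟩) (Set.mem_insert _ _)
    exact ((Set.mem_insert_iff.mp hmem).resolve_right hc₂).symm

namespace SYT

variable {n : ℕ} (m : SYT n)

theorem isLowerSet_image_Iic (k : Fin n) : IsLowerSet (m.pos '' Set.Iic k) := by
  obtain ⟨Y, hY⟩ := m.isSYT.2 k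
  have hcells : (Y.cells : Set (ℕ × ℕ)) = m.pos '' Set.Iic k := by
    rw [hY]
    ext
    simp
  exact hcells ▸ Y.isLowerSet

theorem pos_zero (hn : 0 < n) : m.pos ⟨0, hn⟩ = (0, 0) := by
  have hIic : Set.Iic (⟨0, hn⟩ : Fin n) = {⟨0, hn⟩} := by
    ext j
    simp [Fin.le_def, Fin.ext_iff]
  have hlower := m.isLowerSet_image_Iic ⟨0, hn⟩
  rw [hIic, Set.image_singleton] at hlower
  exact (hlower (show ((0, 0) : ℕ × ℕ) ≤ _ from ⟨Nat.zero_le _, Nat.zero_le _⟩) rfl).symm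

theorem cellContent_pos_succ {i : ℕ} (hi : i + 1 < n) :
    cellContent (m.pos ⟨i + 1, hi⟩) = cellContent (m.pos ⟨i, by omega⟩) + m.d (i + 1) := by
  simp [SYT.d, hi]

theorem pos_eq_of_image_Iio_eq {m' : SYT n} {k : Fin n}
    (hS : m.pos '' Set.Iio k = m'.pos '' Set.Iio k)
    (hc : cellContent (m.pos k) = cellContent (m'.pos k)) : m.pos k = m'.pos k := by
  have hlower {t : SYT n} : IsLowerSet (insert (t.pos k) (t.pos '' Set.Iio k)) := by
    rw [← Set.image_insert_eq, Set.Iio_insert]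
    exact t.isLowerSet_image_Iic k
  have hnotMem {t : SYT n} : t.pos k ∉ t.pos '' Set.Iio k := by
    rw [t.isSYT.1.mem_set_image]
    exact lt_irrefl k
  exact eq_of_isLowerSet_insert_of_cellContent_eq hlower (hS ▸ hlower) hnotMem (hS ▸ hnotMem) hc

end SYT

/-- A standard Young tableau is uniquely determined by its sequence of axial
distances. -/
theorem syt_eq_of_axial_distances_eq (n : ℕ) (m m' : SYT n)
    (h : ∀ k : ℕ, m.d k = m'.d k) : m = m' := by
  suffices hpos : m.pos = m'.pos by
    cases m; cases m'; cases hpos; rfl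
  funext k
  induction k using WellFoundedLT.induction with
  | _ k ih =>
    rcases k with ⟨_ | i, hk⟩
    · rw [m.pos_zero, m'.pos_zero]
    · refine m.pos_eq_of_image_Iio_eq (Set.image_congr ih) ?_
      rw [m.cellContent_pos_succ, m'.cellContent_pos_succ, h,
        ih ⟨i, by omega⟩ (Fin.mk_lt_mk.mpr (Nat.lt_succ_self i))]
end
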